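/- Let 1 ≤ k ≤ n be integers. (a) The linear map j : ℝ^k → ℝ^n sending α to Σ_{i=1}^k α_i e_i is an isometric embedding of (ℝ^k, ℓ_∞) into (ℝ^n, (T^(k))*), i.e. (T^(k))*(j(α)) = ‖α‖_∞ for all α ∈ ℝ^k. (b) Let m = ⌊n/k⌋ and let B_1, ..., B_m be pairwise disjoint subsets of [n] each of size k; the linear map j' : ℝ^m → ℝ^n sending α to the vector whose coordinates on B_j all equal α_j / k and which vanishes elsewhere is an isometric embedding of (ℝ^m, ℓ_∞) into (ℝ^n, T^(k)), i.e. ‖j'(α)‖_{T^(k)} = ‖α‖_∞ for all α ∈ ℝ^m. -/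

import Mathlib

/-!
(a) If `w` vanishes outside a `k`-set `T`, then `⟨v, w⟩ ≤ ∑_{i ∈ T} |vᵢ| ‖w‖_∞ ≤ T^(k)(v) ‖w‖_∞`,
and testing against the signed unit vectors `± eᵢ`, whose top-`k` norm is `1`, shows that this
bound is attained: `(T^(k))*(w) = ‖w‖_∞`.
(b) Every coordinate of `j'(α)` has modulus at most `‖α‖_∞ / k`, with equality on the whole block
`Bⱼ` of a maximal `|αⱼ|`; so the `k` largest moduli add up to exactly `‖α‖_∞`.
-/

noncomputable section
open scoped BigOperators

/-- The dual norm `N*(w) = sup {⟨v,w⟩ : N(v) ≤ 1}`. -/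
def dualNorm {n : ℕ} (N : (Fin n → ℝ) → ℝ) (w : Fin n → ℝ) : ℝ :=
  sSup {t | ∃ v, N v ≤ 1 ∧ t = ∑ i, v i * w i}

/-- The top-`k` norm: the sum of the `k` largest among `|v₁|, …, |vₙ|`. -/
def topkNorm (n k : ℕ) (v : Fin n → ℝ) : ℝ :=
  sSup {t | ∃ S : Finset (Fin n), S.card = k ∧ t = ∑ i ∈ S, |v i|}

open Finset

theorem pi_norm_eq_iSup_abs {ι : Type*} [Fintype ι] (f : ι → ℝ) : ‖f‖ = ⨆ i, |f i| := by
  cases isEmpty_or_nonempty ι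
  · simp [Subsingleton.elim f 0, Real.iSup_of_isEmpty]
  · simp only [iSup, ← Real.norm_eq_abs]
    exact (IsGreatest.pi_norm f).csSup_eq.symm

theorem pi_norm_extend_zero {E : Type*} [SeminormedAddGroup E] {n k : ℕ} (hkn : k ≤ n)
    (α : Fin k → E) : ‖fun i : Fin n => if h : (i : ℕ) < k then α ⟨i, h⟩ else 0‖ = ‖α‖ := by
  refine le_antisymm ((pi_norm_le_iff_of_nonneg (norm_nonneg α)).2 fun i => ?_) ?_
  · split_ifs
    · exact norm_le_pi_norm α _
    · simp
  · calc ‖α‖ = ‖(fun i : Fin n => if h : (i : ℕ) < k then α ⟨i, h⟩ else 0) ∘ Fin.castLE hkn‖ := by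
          congr 1; ext i; simp
      _ ≤ _ := pi_norm_comp_le _ _

section TopkNorm

variable {n k : ℕ}

theorem sum_abs_le_topkNorm (v : Fin n → ℝ) {S : Finset (Fin n)} (hS : #S = k) :
    ∑ i ∈ S, |v i| ≤ topkNorm n k v := by
  refine le_csSup ⟨∑ i, |v i|, ?_⟩ ⟨S, hS, rfl⟩
  rintro _ ⟨T, -, rfl⟩
  exact sum_le_sum_of_subset_of_nonneg (subset_univ T) fun i _ _ => abs_nonneg (v i)

theorem topkNorm_le {v : Fin n → ℝ} {c : ℝ} (hc : 0 ≤ c)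
    (h : ∀ S : Finset (Fin n), #S = k → ∑ i ∈ S, |v i| ≤ c) : topkNorm n k v ≤ c :=
  Real.sSup_le (by rintro _ ⟨S, hS, rfl⟩; exact h S hS) hc

theorem topkNorm_le_sum_abs (v : Fin n → ℝ) : topkNorm n k v ≤ ∑ i, |v i| :=
  topkNorm_le (sum_nonneg fun i _ => abs_nonneg (v i)) fun S _ =>
    sum_le_sum_of_subset_of_nonneg (subset_univ S) fun i _ _ => abs_nonneg (v i)

theorem topkNorm_eq_mul_of_abs_le {u : Fin n → ℝ} {c : ℝ} (hu : ∀ i, |u i| ≤ c)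
    {B : Finset (Fin n)} (hB : #B = k) (hBc : ∀ i ∈ B, |u i| = c) : topkNorm n k u = k * c := by
  refine IsGreatest.csSup_eq ⟨⟨B, hB, ?_⟩, ?_⟩
  · rw [sum_congr rfl hBc, sum_const, hB, nsmul_eq_mul]
  · rintro _ ⟨S, hS, rfl⟩
    simpa [hS] using sum_le_card_nsmul S _ c fun i _ => hu i

theorem sum_mul_le_topkNorm_mul_norm (hkn : k ≤ n) {w : Fin n → ℝ} {S : Finset (Fin n)}
    (hS : #S ≤ k) (hw : ∀ i ∉ S, w i = 0) (v : Fin n → ℝ) :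
    ∑ i, v i * w i ≤ topkNorm n k v * ‖w‖ := by
  obtain ⟨T, hST, hT⟩ := exists_superset_card_eq hS (by simpa using hkn)
  calc ∑ i, v i * w i = ∑ i ∈ T, v i * w i :=
        (sum_subset (subset_univ T) fun i _ hi => by simp [hw i fun h => hi (hST h)]).symm
    _ ≤ ∑ i ∈ T, |v i| * ‖w‖ := sum_le_sum fun i _ =>
        calc v i * w i ≤ |v i| * |w i| := abs_mul (v i) (w i) ▸ le_abs_self _
          _ ≤ |v i| * ‖w‖ := by gcongr; exact norm_le_pi_norm w i
    _ ≤ topkNorm n k v * ‖w‖ := by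
        rw [← sum_mul]
        gcongr
        exact sum_abs_le_topkNorm v hT

end TopkNorm

section DualNorm

variable {n : ℕ} {N : (Fin n → ℝ) → ℝ} {w : Fin n → ℝ} {c : ℝ}

theorem le_dualNorm (hN : ∀ v, N v ≤ 1 → ∑ i, v i * w i ≤ c) {v : Fin n → ℝ} (hv : N v ≤ 1) :
    ∑ i, v i * w i ≤ dualNorm N w :=
  le_csSup ⟨c, by rintro _ ⟨v, hv, rfl⟩; exact hN v hv⟩ ⟨v, hv, rfl⟩

theorem dualNorm_le (hc : 0 ≤ c) (hN : ∀ v, N v ≤ 1 → ∑ i, v i * w i ≤ c) : dualNorm N w ≤ c :=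
  Real.sSup_le (by rintro _ ⟨v, hv, rfl⟩; exact hN v hv) hc

end DualNorm

theorem dualNorm_topkNorm_eq_norm {n k : ℕ} (hkn : k ≤ n) {w : Fin n → ℝ} {S : Finset (Fin n)}
    (hS : #S ≤ k) (hw : ∀ i ∉ S, w i = 0) : dualNorm (topkNorm n k) w = ‖w‖ := by
  have hN : ∀ v, topkNorm n k v ≤ 1 → ∑ i, v i * w i ≤ ‖w‖ := fun v hv =>
    (sum_mul_le_topkNorm_mul_norm hkn hS hw v).trans (mul_le_of_le_one_left (norm_nonneg w) hv)
  refine le_antisymm (dualNorm_le (norm_nonneg w) hN) ((pi_norm_le_iff_of_nonneg ?_).2 fun i => ?_)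
  · simpa using le_dualNorm hN (v := 0) ((topkNorm_le_sum_abs 0).trans (by simp))
  · set v : Fin n → ℝ := Pi.single i (SignType.sign (w i) : ℝ)
    have hv : topkNorm n k v ≤ 1 := by
      refine (topkNorm_le_sum_abs v).trans ?_
      simp only [v, Pi.single_apply, apply_ite, abs_zero, sum_ite_eq', mem_univ, if_true]
      cases SignType.sign (w i) <;> simp
    simpa [v, Pi.single_apply] using le_dualNorm hN hv

/-- (a) `α ↦ ∑_{i<k} αᵢ eᵢ` is an isometric embedding of `ℓ_∞^k` into `((T^{(k)})*)` on
`ℝⁿ`; (b) for pairwise disjoint `B₁, …, B_m ⊆ [n]` of size `k` (`m = ⌊n/k⌋`), the map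
sending `α` to the vector equal to `αⱼ/k` on `Bⱼ` and `0` elsewhere is an isometric
embedding of `ℓ_∞^m` into `(ℝⁿ, T^{(k)})`. -/
theorem linfty_embeds_into_topk_and_dual {n k : ℕ} (hk : 1 ≤ k) (hkn : k ≤ n) :
    (∀ α : Fin k → ℝ,
      dualNorm (topkNorm n k)
          (fun i : Fin n => if h : (i : ℕ) < k then α ⟨i, h⟩ else 0)
        = ⨆ i, |α i|) ∧
    (∀ m : ℕ, m = n / k →
      ∀ B : Fin m → Finset (Fin n),
        (∀ j, (B j).card = k) →
        (∀ j j', j ≠ j' → Disjoint (B j) (B j')) →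
        ∀ (α : Fin m → ℝ) (u : Fin n → ℝ),
          (∀ j, ∀ i ∈ B j, u i = α j / k) →
          (∀ i : Fin n, (∀ j, i ∉ B j) → u i = 0) →
          topkNorm n k u = ⨆ j, |α j|) := by
  refine ⟨fun α => ?_, fun m hm B hB _ α u hu hu₀ => ?_⟩
  · have hw : ∀ i ∉ ({i : Fin n | (i : ℕ) < k} : Finset (Fin n)),
        (if h : (i : ℕ) < k then α ⟨i, h⟩ else 0) = 0 := fun i hi => dif_neg (by simpa using hi)
    rw [dualNorm_topkNorm_eq_norm hkn (Fin.card_filter_val_lt.trans_le (min_le_right n k)) hw,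
       pi_norm_extend_zero hkn, pi_norm_eq_iSup_abs]
  · have hk₀ : (0 : ℝ) < k := by exact_mod_cast hk
    have : Nonempty (Fin m) := ⟨⟨0, hm ▸ Nat.div_pos hkn hk⟩⟩
    obtain ⟨⟨j₀, hj₀⟩, -⟩ := IsGreatest.pi_norm α
    have hu_le : ∀ i, |u i| ≤ ‖α‖ / k := by
      intro i
      by_cases hi : ∃ j, i ∈ B j
      · obtain ⟨j, hj⟩ := hi
        rw [hu j i hj, abs_div, Nat.abs_cast]
        exact div_le_div_of_nonneg_right (norm_le_pi_norm α j) hk₀.le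
      · rw [hu₀ i (not_exists.mp hi), abs_zero]
        positivity
    have hB₀ : ∀ i ∈ B j₀, |u i| = ‖α‖ / k := fun i hi => by
      rw [hu j₀ i hi, abs_div, Nat.abs_cast, ← hj₀]
      rfl
    rw [topkNorm_eq_mul_of_abs_le hu_le (hB j₀) hB₀, mul_div_cancel₀ _ hk₀.ne', pi_norm_eq_iSup_abs]
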